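/- For the complete graph K_n with n ≥ 2, the middle 3-rainbow domination number is γ*_{r3}(K_n) = 3n/2 if n is even and (3n−1)/2 if n is odd. -/

import Mathlib

open SimpleGraph Finset

/-- A `k`-rainbow dominating function on a graph `H`. -/
def IsRDF {W : Type*} (H : SimpleGraph W) (k : ℕ) (f : W → Finset (Fin k)) : Prop :=
  ∀ w, f w = ∅ → ∀ c : Fin k, ∃ u, H.Adj w u ∧ c ∈ f u

/-- The weight of a rainbow dominating function. -/
noncomputable def rdfWeight {W : Type*} [Fintype W] {k : ℕ} (f : W → Finset (Fin k)) : ℕ :=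
  ∑ w, (f w).card

/-- The `k`-rainbow domination number of a graph. -/
noncomputable def rdn {W : Type*} [Fintype W] (H : SimpleGraph W) (k : ℕ) : ℕ :=
  sInf {n | ∃ f : W → Finset (Fin k), IsRDF H k f ∧ rdfWeight f = n}

/-- The middle graph of `G`, on vertex set `V(G) ⊕ E(G)`. -/
def middleGraph {V : Type*} (G : SimpleGraph V) : SimpleGraph (V ⊕ G.edgeSet) where
  Adj x y :=
    match x, y with
    | Sum.inl _, Sum.inl _ => False
    | Sum.inl v, Sum.inr e => v ∈ (e : Sym2 V)
    | Sum.inr e, Sum.inl v => v ∈ (e : Sym2 V)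
    | Sum.inr e, Sum.inr f => e ≠ f ∧ ∃ v, v ∈ (e : Sym2 V) ∧ v ∈ (f : Sym2 V)
  symm := by
    constructor
    rintro (v | e) (w | f) h
    · exact h.elim
    · exact h
    · exact h
    · exact ⟨Ne.symm h.1, h.2.imp fun v hv => ⟨hv.2, hv.1⟩⟩
  loopless := by
    constructor
    rintro (v | e) h
    · exact h.elim
    · exact h.1 rfl

/-- The middle `k`-rainbow domination number `γ*_{rk}(G)`. -/
noncomputable def mrdn {V : Type*} [Fintype V] (G : SimpleGraph V) (k : ℕ) : ℕ :=
  letI := Classical.decEq V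
  letI : DecidableRel G.Adj := fun _ _ => Classical.dec _
  rdn (middleGraph G) k

/-- The `k`-rainbow domatic number: the maximum size of a family of `k`-rainbow
dominating functions with `∑ i |f i v| ≤ k` for each vertex `v`. -/
noncomputable def rdomatic {W : Type*} (H : SimpleGraph W) (k : ℕ) : ℕ :=
  sSup {d | ∃ F : Fin d → W → Finset (Fin k), Function.Injective F ∧
    (∀ i, IsRDF H k (F i)) ∧ ∀ w, (∑ i, (F i w).card) ≤ k}

/-- The matching number `α'(G)`. -/
noncomputable def matchingNumber {V : Type*} [Fintype V] (G : SimpleGraph V) : ℕ :=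
  sSup {n | ∃ M : Finset (Sym2 V), ↑M ⊆ G.edgeSet ∧
    (∀ e ∈ M, ∀ f ∈ M, e ≠ f → ∀ v : V, ¬(v ∈ e ∧ v ∈ f)) ∧ M.card = n}


/-!
Colour the edges `{0, 1}, {2, 3}, …` of `K_n` with all three colours and, for odd `n`, the
leftover vertex with one colour: every other vertex and every other edge meets a fully coloured
edge, and the weight is `3 * (n / 2) + n % 2 = 3 * n / 2`.

Conversely, charge the label of each edge to both its endpoints, so that
`2 w(f) = ∑ᵥ (2 |f(v)| + load(v))`. A vertex with empty label sees all three colours on its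
edges, so every vertex contributes at least `3`, except a light one (a single colour and no
coloured incident edge), which contributes `2`. Two light vertices are never adjacent, so `K_n`
has at most one of them and `2 w(f) ≥ 3n - 1`.
-/

theorem rdn_le_rdfWeight {W : Type*} [Fintype W] {H : SimpleGraph W} {k : ℕ}
    {f : W → Finset (Fin k)} (hf : IsRDF H k f) : rdn H k ≤ rdfWeight f :=
  Nat.sInf_le ⟨f, hf, rfl⟩

theorem le_rdn {W : Type*} [Fintype W] {H : SimpleGraph W} {k m : ℕ}
    (h : ∀ f, IsRDF H k f → m ≤ rdfWeight f) : m ≤ rdn H k := by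
  have huniv : IsRDF H k fun _ => univ :=
    fun _ hw c => absurd (hw ▸ mem_univ c) (notMem_empty c)
  exact le_csInf ⟨_, _, huniv, rfl⟩ fun _ ⟨f, hf, hm⟩ => hm ▸ h f hf

theorem mrdn_eq_rdn {V : Type*} [Fintype V] (G : SimpleGraph V) [Fintype G.edgeSet] (k : ℕ) :
    mrdn G k = rdn (middleGraph G) k := by
  unfold mrdn
  congr!

namespace SimpleGraph

theorem IsVertexCover.exists_mem_of_mem_edgeSet {V : Type*} {G : SimpleGraph V} {C : Set V}
    (hC : G.IsVertexCover C) {e : Sym2 V} (he : e ∈ G.edgeSet) : ∃ v ∈ e, v ∈ C := by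
  induction e using Sym2.ind with
  | _ a b =>
    rcases hC he with ha | hb
    · exact ⟨a, Sym2.mem_mk_left a b, ha⟩
    · exact ⟨b, Sym2.mem_mk_right a b, hb⟩

section EdgeCover

variable {V : Type*} [DecidableEq V] {G : SimpleGraph V}

def edgeEndpoints (M : Finset G.edgeSet) : Finset V :=
  M.biUnion fun e => (e : Sym2 V).toFinset

theorem mem_edgeEndpoints {M : Finset G.edgeSet} {v : V} :
    v ∈ edgeEndpoints M ↔ ∃ e ∈ M, v ∈ (e : Sym2 V) := by
  simp [edgeEndpoints]

variable {k : ℕ}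

def edgeCoverLabelling (M : Finset G.edgeSet) (c : Fin k) : V ⊕ G.edgeSet → Finset (Fin k)
  | .inl v => if v ∈ edgeEndpoints M then ∅ else {c}
  | .inr e => if e ∈ M then univ else ∅

theorem isRDF_edgeCoverLabelling {M : Finset G.edgeSet} (hM : G.IsVertexCover (edgeEndpoints M))
    (c : Fin k) : IsRDF (middleGraph G) k (edgeCoverLabelling M c) := by
  rintro (v | e) hw d
  · have hv : v ∈ edgeEndpoints M := by
      by_contra h
      simp [edgeCoverLabelling, h] at hw
    obtain ⟨e, he, hve⟩ := mem_edgeEndpoints.1 hv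
    exact ⟨.inr e, hve, by simp [edgeCoverLabelling, he]⟩
  · have he : e ∉ M := fun h =>
      (univ_nonempty_iff.2 ⟨d⟩).ne_empty (by simpa [edgeCoverLabelling, h] using hw)
    obtain ⟨v, hve, hv⟩ := hM.exists_mem_of_mem_edgeSet e.2
    obtain ⟨e', he', hve'⟩ := mem_edgeEndpoints.1 hv
    exact ⟨.inr e', ⟨fun h => he (h ▸ he'), v, hve, hve'⟩, by simp [edgeCoverLabelling, he']⟩

theorem rdfWeight_edgeCoverLabelling [Fintype V] [Fintype G.edgeSet] (M : Finset G.edgeSet)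
    (c : Fin k) : rdfWeight (edgeCoverLabelling M c) = k * #M + #(edgeEndpoints M)ᶜ := by
  simp only [rdfWeight, Fintype.sum_sum_type, edgeCoverLabelling, apply_ite card, card_empty,
    card_singleton, card_univ, Fintype.card_fin]
  rw [add_comm]
  simp only [sum_ite, sum_const_zero, sum_const, smul_eq_mul, add_zero, zero_add, one_mul,
    mul_comm, ← compl_filter, filter_mem_eq_inter, univ_inter]

end EdgeCover

section EdgeLoad

variable {V : Type*} [DecidableEq V] {G : SimpleGraph V} [Fintype G.edgeSet] {k : ℕ}
  {f : V ⊕ G.edgeSet → Finset (Fin k)}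

def edgeLoad (f : V ⊕ G.edgeSet → Finset (Fin k)) (v : V) : ℕ :=
  ∑ e ∈ ({e : G.edgeSet | v ∈ (e : Sym2 V)} : Finset _), #(f (.inr e))

theorem sum_edgeLoad [Fintype V] (f : V ⊕ G.edgeSet → Finset (Fin k)) :
    ∑ v, edgeLoad f v = 2 * ∑ e : G.edgeSet, #(f (.inr e)) := by
  unfold edgeLoad
  rw [Finset.sum_comm' (t' := univ) (s' := fun e : G.edgeSet => (e : Sym2 V).toFinset) (by simp),
    mul_sum]
  refine sum_congr rfl fun e _ => ?_
  rw [sum_const, Sym2.card_toFinset_of_not_isDiag _ (G.not_isDiag_of_mem_edgeSet e.2), smul_eq_mul]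

theorem two_mul_rdfWeight_middleGraph [Fintype V] (f : V ⊕ G.edgeSet → Finset (Fin k)) :
    2 * rdfWeight f = ∑ v, (2 * #(f (.inl v)) + edgeLoad f v) := by
  rw [rdfWeight, Fintype.sum_sum_type, mul_add, mul_sum, sum_add_distrib, sum_edgeLoad]

theorem eq_empty_of_edgeLoad_eq_zero {v : V} {e : G.edgeSet} (h : edgeLoad f v = 0)
    (hve : v ∈ (e : Sym2 V)) : f (.inr e) = ∅ :=
  card_eq_zero.1 (sum_eq_zero_iff.1 h e (by simpa using hve))

theorem le_edgeLoad_of_isRDF (hf : IsRDF (middleGraph G) k f) {v : V} (hv : f (.inl v) = ∅) :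
    k ≤ edgeLoad f v := by
  have hcover : (univ : Finset (Fin k)) ⊆
      ({e : G.edgeSet | v ∈ (e : Sym2 V)} : Finset _).biUnion fun e => f (.inr e) := by
    intro c _
    obtain ⟨w | e, hadj, hc⟩ := hf _ hv c
    · exact hadj.elim
    · exact mem_biUnion.2 ⟨e, mem_filter.2 ⟨mem_univ _, hadj⟩, hc⟩
  simpa [edgeLoad] using (card_le_card hcover).trans card_biUnion_le

def lightVertices [Fintype V] (f : V ⊕ G.edgeSet → Finset (Fin k)) : Finset V :=
  {v | #(f (.inl v)) = 1 ∧ edgeLoad f v = 0}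

variable [Fintype V]

theorem three_le_of_notMem_lightVertices (hk : 3 ≤ k) (hf : IsRDF (middleGraph G) k f) {v : V}
    (hv : v ∉ lightVertices f) : 3 ≤ 2 * #(f (.inl v)) + edgeLoad f v := by
  simp only [lightVertices, mem_filter, mem_univ, true_and] at hv
  by_cases h0 : f (.inl v) = ∅
  · have := le_edgeLoad_of_isRDF hf h0
    omega
  · have := card_pos.2 (nonempty_iff_ne_empty.2 h0)
    omega

/-- The edge `uv` is uncoloured and so are its neighbouring edges, so it would have to see all
colours on `u` and `v`, which carry only two. -/
theorem not_adj_of_mem_lightVertices (hk : 3 ≤ k) (hf : IsRDF (middleGraph G) k f) {u v : V}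
    (hu : u ∈ lightVertices f) (hv : v ∈ lightVertices f) : ¬G.Adj u v := by
  intro huv
  simp only [lightVertices, mem_filter, mem_univ, true_and] at hu hv
  have hbare : ∀ e' : G.edgeSet, ∀ x ∈ s(u, v), x ∈ (e' : Sym2 V) → f (.inr e') = ∅ := by
    intro e' x hx hxe'
    rcases Sym2.mem_iff.1 hx with rfl | rfl
    · exact eq_empty_of_edgeLoad_eq_zero hu.2 hxe'
    · exact eq_empty_of_edgeLoad_eq_zero hv.2 hxe'
  have hcover : (univ : Finset (Fin k)) ⊆ f (.inl u) ∪ f (.inl v) := by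
    intro c _
    obtain ⟨x | e', hadj, hc⟩ :=
      hf (.inr ⟨s(u, v), huv⟩) (hbare _ u (Sym2.mem_mk_left u v) (Sym2.mem_mk_left u v)) c
    · rcases Sym2.mem_iff.1 hadj with rfl | rfl <;> simp [hc]
    · obtain ⟨-, x, hx, hxe'⟩ := hadj
      simp [hbare e' x hx hxe'] at hc
  have := (card_le_card hcover).trans (card_union_le _ _)
  simp only [card_univ, Fintype.card_fin] at this
  omega

theorem three_mul_card_le_of_isRDF (hk : 3 ≤ k) (hf : IsRDF (middleGraph G) k f) :
    3 * Fintype.card V ≤ 2 * rdfWeight f + #(lightVertices f) := by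
  have hvertex : ∀ v ∈ (univ : Finset V),
      3 ≤ 2 * #(f (.inl v)) + edgeLoad f v + if v ∈ lightVertices f then 1 else 0 := by
    intro v _
    split_ifs with hv
    · simp only [lightVertices, mem_filter, mem_univ, true_and] at hv
      omega
    · exact three_le_of_notMem_lightVertices hk hf hv
  have := card_nsmul_le_sum _ _ _ hvertex
  rwa [sum_add_distrib, ← two_mul_rdfWeight_middleGraph, ← card_filter, filter_mem_eq_inter,
    univ_inter, card_univ, smul_eq_mul, mul_comm] at this

end EdgeLoad

theorem card_lightVertices_top_le_one {V : Type*} [Fintype V] [DecidableEq V] {k : ℕ}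
    {f : V ⊕ (⊤ : SimpleGraph V).edgeSet → Finset (Fin k)} (hk : 3 ≤ k)
    (hf : IsRDF (middleGraph ⊤) k f) : #(lightVertices f) ≤ 1 :=
  card_le_one.2 fun _ hu _ hv =>
    by_contra fun h => not_adj_of_mem_lightVertices hk hf hu hv ((top_adj _ _).2 h)

section CompleteGraph

variable {n : ℕ}

def pairEdge (n : ℕ) (i : Fin (n / 2)) : (⊤ : SimpleGraph (Fin n)).edgeSet :=
  ⟨s(⟨2 * i, by omega⟩, ⟨2 * i + 1, by omega⟩), by simp [Fin.ext_iff]⟩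

theorem pairEdge_injective (n : ℕ) : Function.Injective (pairEdge n) := by
  intro i j h
  simp only [pairEdge, Subtype.mk.injEq, Sym2.eq_iff, Fin.ext_iff] at h
  omega

def pairMatching (n : ℕ) : Finset (⊤ : SimpleGraph (Fin n)).edgeSet :=
  univ.map ⟨pairEdge n, pairEdge_injective n⟩

theorem card_pairMatching : #(pairMatching n) = n / 2 := by
  simp [pairMatching]

theorem mem_edgeEndpoints_pairMatching {v : Fin n} (hv : v < 2 * (n / 2)) :
    v ∈ edgeEndpoints (pairMatching n) :=
  mem_edgeEndpoints.2 ⟨pairEdge n ⟨v / 2, by omega⟩, by simp [pairMatching], by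
    simp only [pairEdge, Sym2.mem_iff, Fin.ext_iff]
    omega⟩

theorem isVertexCover_pairMatching :
    (⊤ : SimpleGraph (Fin n)).IsVertexCover (edgeEndpoints (pairMatching n)) := by
  intro u v huv
  have hne : u.val ≠ v.val := Fin.val_ne_of_ne ((top_adj _ _).1 huv)
  by_cases hu : u.val < 2 * (n / 2)
  · exact .inl (mem_edgeEndpoints_pairMatching hu)
  · exact .inr (mem_edgeEndpoints_pairMatching (by omega))

theorem card_compl_edgeEndpoints_pairMatching : #(edgeEndpoints (pairMatching n))ᶜ ≤ n % 2 := by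
  have hmaps : ∀ v ∈ (edgeEndpoints (pairMatching n))ᶜ, v.val ∈ Ico (2 * (n / 2)) n := by
    intro v hv
    rw [mem_compl] at hv
    exact mem_Ico.2 ⟨not_lt.1 fun h => hv (mem_edgeEndpoints_pairMatching h), v.2⟩
  have := card_le_card_of_injOn Fin.val hmaps Fin.val_injective.injOn
  rw [Nat.card_Ico] at this
  omega

theorem rdn_middleGraph_top_three (n : ℕ) :
    rdn (middleGraph (⊤ : SimpleGraph (Fin n))) 3 = 3 * n / 2 := by
  apply le_antisymm
  · calc
      _ ≤ rdfWeight (edgeCoverLabelling (pairMatching n) (0 : Fin 3)) :=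
        rdn_le_rdfWeight (isRDF_edgeCoverLabelling isVertexCover_pairMatching 0)
      _ ≤ 3 * n / 2 := by
        have hleftover := card_compl_edgeEndpoints_pairMatching (n := n)
        rw [rdfWeight_edgeCoverLabelling, card_pairMatching]
        omega
  · refine le_rdn fun f hf => ?_
    have hcount := three_mul_card_le_of_isRDF le_rfl hf
    have hlight := card_lightVertices_top_le_one le_rfl hf
    rw [Fintype.card_fin] at hcount
    omega

end CompleteGraph

end SimpleGraph

theorem stmt8_general (n : ℕ) :
    (Even n → mrdn (⊤ : SimpleGraph (Fin n)) 3 = 3 * n / 2) ∧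
    (Odd n → mrdn (⊤ : SimpleGraph (Fin n)) 3 = (3 * n - 1) / 2) := by
  rw [mrdn_eq_rdn, SimpleGraph.rdn_middleGraph_top_three]
  exact ⟨fun _ => rfl, fun ⟨m, hm⟩ => by omega⟩

/-- middle 3-rainbow domination number of complete graphs. -/
theorem stmt8 (n : ℕ) (hn : 2 ≤ n) :
    (Even n → mrdn (⊤ : SimpleGraph (Fin n)) 3 = 3 * n / 2) ∧
    (Odd n → mrdn (⊤ : SimpleGraph (Fin n)) 3 = (3 * n - 1) / 2) :=
  stmt8_general n
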